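/- The commuter of the hom-associative Weyl algebra A₁ᵏ, i.e. the set C(A₁ᵏ) := {a ∈ A₁ : a * b = b * a for all b ∈ A₁} where a * b := α_k(a·b), equals the unital K-subalgebra of A₁ generated by x^p and y^p (the set of polynomial expressions in x^p and y^p with coefficients in K). -/

import Mathlib

/-!
The representation of `A₁` on `K[v][u]` with `x = v + ∂/∂u`, `y = u` sends `y^m x^n` to
`u^m v^n` when applied to `1`, so the ordered monomials form a basis and `a ↦ a · 1` is
injective. Under this map `α_k` becomes the substitution `u ↦ f(u)`, `f = X + ∑ kᵢ X^{ip}`,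
which is injective since `f' = 1` forces `f` to be non-constant. Hence `α_k (a b) = α_k (b a)`
for all `b` iff `a` is central. Finally `[x, y^m x^n] = m y^{m-1} x^n` and
`[y^m x^n, y] = n y^m x^{n-1}`, so in characteristic `p` the centre is spanned by the monomials
with `p ∣ m` and `p ∣ n`, i.e. it is `K[x^p, y^p]`.
-/

noncomputable section

/-- The defining relation of the first Weyl algebra: `x * y = y * x + 1`. -/
inductive WeylRel (K : Type*) [Field K] :
    FreeAlgebra K (Fin 2) → FreeAlgebra K (Fin 2) → Prop
  | comm : WeylRel K (FreeAlgebra.ι K 0 * FreeAlgebra.ι K 1)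
      (FreeAlgebra.ι K 1 * FreeAlgebra.ι K 0 + 1)

/-- The first Weyl algebra `A₁` over `K`: the free unital associative `K`-algebra on two
generators `x, y` modulo the relation `x·y − y·x = 1`. -/
abbrev Weyl (K : Type*) [Field K] := RingQuot (WeylRel K)

/-- The generator `x` of the first Weyl algebra. -/
def Wx (K : Type*) [Field K] : Weyl K :=
  RingQuot.mkAlgHom K (WeylRel K) (FreeAlgebra.ι K 0)

/-- The generator `y` of the first Weyl algebra. -/
def Wy (K : Type*) [Field K] : Weyl K :=
  RingQuot.mkAlgHom K (WeylRel K) (FreeAlgebra.ι K 1)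


namespace Weyl

open Polynomial

variable {K : Type*} [Field K]

theorem Wx_mul_Wy : Wx K * Wy K = Wy K * Wx K + 1 := by
  simpa [Wx, Wy] using RingQuot.mkAlgHom_rel K (WeylRel.comm (K := K))

theorem adjoin_Wx_Wy : Algebra.adjoin K {Wx K, Wy K} = ⊤ := by
  have hrange :
      Set.range (RingQuot.mkAlgHom K (WeylRel K) ∘ FreeAlgebra.ι K) = {Wx K, Wy K} := by
    ext a
    simp [Fin.exists_fin_two, Wx, Wy, eq_comm]
  rw [← hrange, Set.range_comp, ← AlgHom.map_adjoin, FreeAlgebra.adjoin_range_ι, Algebra.map_top,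
    AlgHom.range_eq_top]
  exact RingQuot.mkAlgHom_surjective K (WeylRel K)

theorem mem_center_of_commute {z : Weyl K} (hx : Commute (Wx K) z) (hy : Commute (Wy K) z) :
    z ∈ Subalgebra.center K (Weyl K) := by
  have hle : Algebra.adjoin K {Wx K, Wy K} ≤ Subalgebra.centralizer K {z} := Algebra.adjoin_le <| by
    simp [Set.insert_subset_iff, Set.mem_centralizer_iff, hx.eq, hy.eq]
  rw [adjoin_Wx_Wy] at hle
  exact Subalgebra.mem_center_iff.mpr fun b =>
    ((Subalgebra.mem_centralizer_iff K).mp (hle Algebra.mem_top) z rfl).symm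

theorem Wx_pow_succ_mul_Wy (n : ℕ) :
    Wx K ^ (n + 1) * Wy K = Wy K * Wx K ^ (n + 1) + ((n + 1 : ℕ) : K) • Wx K ^ n := by
  induction n with
  | zero => simpa using Wx_mul_Wy
  | succ n ih =>
    rw [pow_succ', mul_assoc, ih, mul_add, ← mul_assoc, Wx_mul_Wy, add_mul, one_mul, mul_assoc,
      ← pow_succ', mul_smul_comm, ← pow_succ']
    push_cast
    module

theorem Wx_mul_Wy_pow_succ (m : ℕ) :
    Wx K * Wy K ^ (m + 1) = Wy K ^ (m + 1) * Wx K + ((m + 1 : ℕ) : K) • Wy K ^ m := by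
  induction m with
  | zero => simpa using Wx_mul_Wy
  | succ m ih =>
    rw [pow_succ, ← mul_assoc, ih, add_mul, smul_mul_assoc, mul_assoc, Wx_mul_Wy, mul_add,
      mul_one, ← mul_assoc, ← pow_succ, ← pow_succ]
    push_cast
    module

theorem commute_Wx_pow_Wy {p : ℕ} (hp : (p : K) = 0) : Commute (Wx K ^ p) (Wy K) := by
  rcases p with _ | n
  · simp
  · rw [Commute, SemiconjBy, Wx_pow_succ_mul_Wy, hp, zero_smul, add_zero]

theorem commute_Wx_Wy_pow {p : ℕ} (hp : (p : K) = 0) : Commute (Wx K) (Wy K ^ p) := by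
  rcases p with _ | m
  · simp
  · rw [Commute, SemiconjBy, Wx_mul_Wy_pow_succ, hp, zero_smul, add_zero]

/-- On `K[X][X] = K[v][u]` (with `v = C X`), `x` acts as `v + ∂/∂u` and `y` as multiplication
by `u`. Unlike the action `x = ∂/∂u` on `K[u]`, which kills `x ^ p`, this one is faithful. -/
def actX : Module.End K K[X][X] :=
  Algebra.lmul K K[X][X] (C X) + (derivative (R := K[X])).restrictScalars K

def actY : Module.End K K[X][X] := Algebra.lmul K K[X][X] X

theorem actX_apply (q : K[X][X]) : actX q = C X * q + derivative q := rfl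

theorem actY_apply (q : K[X][X]) : actY q = X * q := rfl

theorem actX_mul_actY : (actX : Module.End K K[X][X]) * actY = actY * actX + 1 := by
  ext q : 1
  simp only [Module.End.mul_apply, LinearMap.add_apply, actX_apply, actY_apply, derivative_mul,
    derivative_X, Module.End.one_apply]
  ring

def rep : Weyl K →ₐ[K] Module.End K K[X][X] :=
  RingQuot.liftAlgHom K ⟨FreeAlgebra.lift K ![actX, actY], by
    rintro _ _ ⟨⟩
    simpa using actX_mul_actY⟩

theorem rep_Wx : rep (Wx K) = actX := by
  simp [rep, Wx]

theorem rep_Wy : rep (Wy K) = actY := by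
  simp [rep, Wy]

theorem actX_pow_one (n : ℕ) : (actX ^ n : Module.End K K[X][X]) 1 = C (X ^ n) := by
  induction n with
  | zero => simp
  | succ n ih =>
    rw [pow_succ', Module.End.mul_apply, ih, actX_apply, derivative_C, add_zero, ← C_mul,
      ← pow_succ']

def symbol : Weyl K →ₗ[K] K[X][X] := LinearMap.applyₗ 1 ∘ₗ rep.toLinearMap

theorem symbol_aeval_pow_mul (g : K[X]) (m n : ℕ) :
    symbol (aeval (Wy K) g ^ m * Wx K ^ n) = aeval X g ^ m * C (X ^ n) := by
  have hg : rep (aeval (Wy K) g) = Algebra.lmul K K[X][X] (aeval X g) := by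
    rw [← aeval_algHom_apply, rep_Wy, actY, ← aeval_algHom_apply]
  rw [symbol, LinearMap.comp_apply, AlgHom.toLinearMap_apply, map_mul, map_pow, map_pow, hg,
    rep_Wx, LinearMap.applyₗ_apply_apply, Module.End.mul_apply, actX_pow_one, ← map_pow]
  rfl

theorem linearIndependent_pow_mul_C_X_pow {G : K[X][X]} (hG : 0 < G.natDegree) :
    LinearIndependent K fun mn : ℕ × ℕ => G ^ mn.1 * C (X ^ mn.2) := by
  have hX : LinearIndependent K fun mn : ℕ × ℕ => (X : K[X][X]) ^ mn.1 * C (X ^ mn.2) := by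
    convert ((basisMonomials K).smulTower' (basisMonomials K[X])).linearIndependent using 1
    ext1 mn
    simp only [Module.Basis.smulTower'_apply, coe_basisMonomials, monomial_one_right_eq_X_pow,
      smul_eq_C_mul, mul_comm]
  have hG' : Function.Injective (aeval G) :=
    transcendental_iff_injective.mp <|
      G.transcendental hG.ne' (mem_nonZeroDivisors_of_ne_zero (leadingCoeff_ne_zero.mpr
        (ne_zero_of_natDegree_gt hG)))
  simpa [Function.comp_def] using
    hX.map' ((aeval G).toLinearMap.restrictScalars K) (LinearMap.ker_eq_bot.mpr hG')

def mon (K : Type*) [Field K] (mn : ℕ × ℕ) : Weyl K := Wy K ^ mn.1 * Wx K ^ mn.2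

theorem Wy_mul_mon (m n : ℕ) : Wy K * mon K (m, n) = mon K (m + 1, n) := by
  rw [mon, mon, ← mul_assoc, ← pow_succ']

theorem mon_mul_Wx (m n : ℕ) : mon K (m, n) * Wx K = mon K (m, n + 1) := by
  rw [mon, mon, mul_assoc, ← pow_succ]

theorem Wx_mul_mon_zero (n : ℕ) : Wx K * mon K (0, n) = mon K (0, n + 1) := by
  rw [mon, mon, pow_zero, one_mul, one_mul, ← pow_succ']

theorem mon_zero_mul_Wy (m : ℕ) : mon K (m, 0) * Wy K = mon K (m + 1, 0) := by
  rw [mon, mon, pow_zero, mul_one, mul_one, ← pow_succ]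

theorem Wx_mul_mon_succ (m n : ℕ) :
    Wx K * mon K (m + 1, n) = mon K (m + 1, n + 1) + ((m + 1 : ℕ) : K) • mon K (m, n) := by
  rw [mon, ← mul_assoc, Wx_mul_Wy_pow_succ, add_mul, mul_assoc, ← pow_succ', smul_mul_assoc]
  rfl

theorem mon_succ_mul_Wy (m n : ℕ) :
    mon K (m, n + 1) * Wy K = mon K (m + 1, n + 1) + ((n + 1 : ℕ) : K) • mon K (m, n) := by
  rw [mon, mul_assoc, Wx_pow_succ_mul_Wy, mul_add, ← mul_assoc, ← pow_succ, mul_smul_comm]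
  rfl

theorem span_range_mon : Submodule.span K (Set.range (mon K)) = ⊤ := by
  set S := Submodule.span K (Set.range (mon K))
  have hmon (mn : ℕ × ℕ) : mon K mn ∈ S := Submodule.subset_span ⟨mn, rfl⟩
  have hgen : ∀ g ∈ ({Wx K, Wy K} : Set (Weyl K)), S ≤ S.comap (LinearMap.mulLeft K g) := by
    rintro g (rfl | rfl) <;> refine Submodule.span_le.mpr (Set.range_subset_iff.mpr ?_)
    · rintro ⟨_ | m, n⟩
      · simpa [Wx_mul_mon_zero] using hmon (0, n + 1)
      · simpa [Wx_mul_mon_succ] using S.add_mem (hmon _) (S.smul_mem _ (hmon (m, n)))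
    · rintro ⟨m, n⟩
      simpa [Wy_mul_mon] using hmon (m + 1, n)
  have hmul (a : Weyl K) : ∀ s ∈ S, a * s ∈ S := by
    have ha : a ∈ Algebra.adjoin K {Wx K, Wy K} := by simp [adjoin_Wx_Wy]
    induction ha using Algebra.adjoin_induction with
    | mem g hg => exact fun s hs => hgen g hg hs
    | algebraMap r => exact fun s hs => by simpa [Algebra.smul_def] using S.smul_mem r hs
    | add a b _ _ ha hb =>
      exact fun s hs => by simpa [add_mul] using S.add_mem (ha s hs) (hb s hs)
    | mul a b _ _ ha hb => exact fun s hs => by simpa [mul_assoc] using ha _ (hb s hs)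
  refine eq_top_iff.mpr fun a _ => ?_
  simpa using hmul a 1 (by simpa [mon] using hmon (0, 0))

theorem symbol_mon (mn : ℕ × ℕ) : symbol (mon K mn) = X ^ mn.1 * C (X ^ mn.2) := by
  simpa [mon] using symbol_aeval_pow_mul (X : K[X]) mn.1 mn.2

theorem linearIndependent_mon : LinearIndependent K (mon K) :=
  .of_comp symbol <| by
    simpa [Function.comp_def, symbol_mon] using
      linearIndependent_pow_mul_C_X_pow (G := X) (by simp)

def monBasis (K : Type*) [Field K] : Module.Basis (ℕ × ℕ) K (Weyl K) :=
  .mk linearIndependent_mon span_range_mon.ge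

@[simp]
theorem monBasis_apply (mn : ℕ × ℕ) : monBasis K mn = mon K mn := Module.Basis.mk_apply ..

@[simp]
theorem monBasis_repr_mon (mn : ℕ × ℕ) :
    (monBasis K).repr (mon K mn) = Finsupp.single mn 1 := by
  rw [← monBasis_apply, Module.Basis.repr_self]

theorem monBasis_repr_Wx_mul_sub_mul_Wx (a : Weyl K) (m n : ℕ) :
    (monBasis K).repr (Wx K * a - a * Wx K) (m, n) =
      ((m + 1 : ℕ) : K) * (monBasis K).repr a (m + 1, n) := by
  have key : (monBasis K).coord (m, n) ∘ₗ
      (LinearMap.mulLeft K (Wx K) - LinearMap.mulRight K (Wx K)) =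
        ((m + 1 : ℕ) : K) • (monBasis K).coord (m + 1, n) := by
    refine (monBasis K).ext fun ⟨i, j⟩ => ?_
    rcases i with _ | i
    · simp [Wx_mul_mon_zero, mon_mul_Wx]
    · obtain rfl | h := eq_or_ne i m <;>
        simp [Wx_mul_mon_succ, mon_mul_Wx, Finsupp.single_apply, *]
  simpa using LinearMap.congr_fun key a

theorem monBasis_repr_mul_Wy_sub_Wy_mul (a : Weyl K) (m n : ℕ) :
    (monBasis K).repr (a * Wy K - Wy K * a) (m, n) =
      ((n + 1 : ℕ) : K) * (monBasis K).repr a (m, n + 1) := by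
  have key : (monBasis K).coord (m, n) ∘ₗ
      (LinearMap.mulRight K (Wy K) - LinearMap.mulLeft K (Wy K)) =
        ((n + 1 : ℕ) : K) • (monBasis K).coord (m, n + 1) := by
    refine (monBasis K).ext fun ⟨i, j⟩ => ?_
    rcases j with _ | j
    · simp [mon_zero_mul_Wy, Wy_mul_mon]
    · obtain rfl | h := eq_or_ne j n <;>
        simp [mon_succ_mul_Wy, Wy_mul_mon, Finsupp.single_apply, *]
  simpa using LinearMap.congr_fun key a

theorem natCast_mul_monBasis_repr_eq_zero_of_commute_Wx {a : Weyl K} (ha : Commute (Wx K) a)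
    (m n : ℕ) : (m : K) * (monBasis K).repr a (m, n) = 0 := by
  rcases m with _ | m
  · simp
  · rw [← monBasis_repr_Wx_mul_sub_mul_Wx, ha.eq, sub_self, map_zero, Finsupp.zero_apply]

theorem natCast_mul_monBasis_repr_eq_zero_of_commute_Wy {a : Weyl K} (ha : Commute a (Wy K))
    (m n : ℕ) : (n : K) * (monBasis K).repr a (m, n) = 0 := by
  rcases n with _ | n
  · simp
  · rw [← monBasis_repr_mul_Wy_sub_Wy_mul, ha.eq, sub_self, map_zero, Finsupp.zero_apply]

theorem center_eq_adjoin_pow (p : ℕ) [CharP K p] :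
    Subalgebra.center K (Weyl K) = Algebra.adjoin K {Wx K ^ p, Wy K ^ p} := by
  have hp : (p : K) = 0 := CharP.cast_eq_zero K p
  refine le_antisymm (fun a ha => ?_) (Algebra.adjoin_le ?_)
  · have hcomm (b : Weyl K) : Commute b a := Subalgebra.mem_center_iff.mp ha b
    rw [← (monBasis K).linearCombination_repr a, Finsupp.linearCombination_apply]
    refine Subalgebra.sum_mem _ fun ⟨m, n⟩ hmn => Subalgebra.smul_mem _ ?_ _
    have hc : (monBasis K).repr a (m, n) ≠ 0 := Finsupp.mem_support_iff.mp hmn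
    obtain ⟨i, rfl⟩ : p ∣ m := (CharP.cast_eq_zero_iff K p m).mp <| (mul_eq_zero.mp
      (natCast_mul_monBasis_repr_eq_zero_of_commute_Wx (hcomm _) m n)).resolve_right hc
    obtain ⟨j, rfl⟩ : p ∣ n := (CharP.cast_eq_zero_iff K p n).mp <| (mul_eq_zero.mp
      (natCast_mul_monBasis_repr_eq_zero_of_commute_Wy (hcomm _).symm _ n)).resolve_right hc
    rw [monBasis_apply, mon, pow_mul, pow_mul]
    exact mul_mem (pow_mem (Algebra.subset_adjoin (by simp)) _)
      (pow_mem (Algebra.subset_adjoin (by simp)) _)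
  · rintro _ (rfl | rfl)
    · exact mem_center_of_commute ((Commute.refl _).pow_right p) (commute_Wx_pow_Wy hp).symm
    · exact mem_center_of_commute (commute_Wx_Wy_pow hp) ((Commute.refl _).pow_right p)

theorem injective_of_map_Wx_of_map_Wy {α : Weyl K →ₐ[K] Weyl K} {f : K[X]}
    (hf : 0 < f.natDegree) (hx : α (Wx K) = Wx K) (hy : α (Wy K) = aeval (Wy K) f) :
    Function.Injective α := by
  have hF : 0 < (aeval (X : K[X][X]) f).natDegree := by
    rwa [← aeval_map_algebraMap K[X], aeval_X_left_apply,
      natDegree_map_eq_of_injective (algebraMap K K[X]).injective]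
  have hli : LinearIndependent K ((symbol ∘ₗ α.toLinearMap) ∘ mon K) := by
    simpa [Function.comp_def, mon, hx, hy, symbol_aeval_pow_mul] using
      linearIndependent_pow_mul_C_X_pow hF
  exact Function.Injective.of_comp (f := symbol) (g := α)
    (LinearMap.injective_of_linearIndependent span_range_mon hli)

end Weyl

theorem homWeyl_commuter_general (K : Type*) [Field K] (p : ℕ) [CharP K p]
    (M : ℕ) (k : ℕ → K) (α : Weyl K →ₐ[K] Weyl K)
    (hx : α (Wx K) = Wx K)
    (hy : α (Wy K) = Wy K + ∑ i ∈ Finset.range (M + 1), k i • (Wy K) ^ (i * p)) :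
    {a : Weyl K | ∀ b : Weyl K, α (a * b) = α (b * a)} =
      (Algebra.adjoin K {Wx K ^ p, Wy K ^ p} : Subalgebra K (Weyl K)) := by
  set f : Polynomial K := .X + ∑ i ∈ Finset.range (M + 1), .C (k i) * .X ^ (i * p)
  have hαy : α (Wy K) = Polynomial.aeval (Wy K) f := by
    simp [f, hy, Algebra.smul_def]
  -- the terms `X ^ (i * p)` have derivative zero in characteristic `p`
  have hf : Polynomial.derivative f = 1 := by
    simp [f, Polynomial.derivative_X_pow]
  have hf_pos : 0 < f.natDegree := Nat.pos_of_ne_zero fun h => by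
    simp [Polynomial.derivative_of_natDegree_zero h] at hf
  have hα := Weyl.injective_of_map_Wx_of_map_Wy hf_pos hx hαy
  rw [← Weyl.center_eq_adjoin_pow p]
  ext a
  simp only [Set.mem_ofPred_eq, SetLike.mem_coe, hα.eq_iff, Subalgebra.mem_center_iff]
  exact forall_congr' fun _ => eq_comm

/-- The commuter of the hom-associative Weyl algebra `A₁ᵏ` (the Yau twist of `A₁` by `α_k`,
with product `a * b := α_k (a·b)`) equals the unital `K`-subalgebra of `A₁` generated by
`x^p` and `y^p`. -/
theorem homWeyl_commuter (K : Type*) [Field K] (p : ℕ) (hp : p.Prime) [CharP K p]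
    (M : ℕ) (k : ℕ → K) (α : Weyl K →ₐ[K] Weyl K)
    (hx : α (Wx K) = Wx K)
    (hy : α (Wy K) = Wy K + ∑ i ∈ Finset.range (M + 1), k i • (Wy K) ^ (i * p)) :
    {a : Weyl K | ∀ b : Weyl K, α (a * b) = α (b * a)} =
      (Algebra.adjoin K {Wx K ^ p, Wy K ^ p} : Subalgebra K (Weyl K)) :=
  homWeyl_commuter_general K p M k α hx hy
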